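/- arXiv:2509.24348 — 5 statements merged into one kernel-verified Lean document; each statement's English description precedes it below -/
import Mathlib

section
/- Let n, p, a, s be positive integers with 1 ≤ p ≤ n, and let q = (q_1 > q_2 > ⋯ > q_a > 0 > q_{a+1} > ⋯ > q_s > -n) be a strictly decreasing sequence of integers with q_1 ≤ n, such that q_1, ..., q_a, -q_{a+1}, ..., -q_s are pairwise distinct. Define ρ_i = #{j : 1 ≤ j < i, q_j ≥ 1 - q_i}. Then the sequence (ρ_1, ..., ρ_s) is unimodal; in fact ρ_i = i - 1 for i ≤ a, and ρ is weakly decreasing on indices i > a. Moreover the partition λ defined by λ_i = q_i + p - 1 for i ≤ a and λ_i = q_i + p - 1 + i - ρ_i for i > a is ρ-strict, i.e., the sequence μ_i = λ_i + ρ_i is weakly decreasing. -/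
/-- Unimodality of `ρ` and `ρ`-strictness of `λ` for the data `(p, q)` defining
an isotropic degeneracy locus.  Here `q : {1,…,s} → ℤ` is strictly decreasing
with `q 1 ≤ n`, `q s > -n`, `q i > 0` for `i ≤ a`, `q i < 0` for `i > a`, and
`q_1,…,q_a, -q_{a+1},…,-q_s` pairwise distinct;
`ρ i = #{j : 1 ≤ j < i, q j ≥ 1 - q i}`, `λ i = q i + p - 1` for `i ≤ a` and
`λ i = q i + p - 1 + i - ρ i` for `i > a`.  Then `ρ i = i - 1` for `i ≤ a`,
`ρ` is weakly decreasing on indices `> a`, and `μ i = λ i + ρ i` is weakly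
decreasing (λ is ρ-strict). -/
theorem stmt3 (n p a s : ℕ) (q : ℕ → ℤ)
    (hp1 : 1 ≤ p) (hpn : p ≤ n) (ha1 : 1 ≤ a) (has : a ≤ s) (hs1 : 1 ≤ s)
    (hdec : ∀ i, 1 ≤ i → i < s → q (i + 1) < q i)
    (hq1 : q 1 ≤ (n : ℤ)) (hqs : -(n : ℤ) < q s)
    (hpos : ∀ i, 1 ≤ i → i ≤ a → 0 < q i)
    (hneg : ∀ i, a < i → i ≤ s → q i < 0)
    (hdist : ∀ i j, 1 ≤ i → i ≤ a → a < j → j ≤ s → q i ≠ -q j) :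
    let ρ : ℕ → ℕ := fun i => ((Finset.Icc 1 (i - 1)).filter fun j => 1 - q i ≤ q j).card
    let lam : ℕ → ℤ := fun i =>
      if i ≤ a then q i + (p : ℤ) - 1 else q i + (p : ℤ) - 1 + (i : ℤ) - (ρ i : ℤ)
    (∀ i, 1 ≤ i → i ≤ a → (ρ i : ℤ) = (i : ℤ) - 1) ∧
    (∀ i, a < i → i + 1 ≤ s → ρ (i + 1) ≤ ρ i) ∧
    (∀ i, 1 ≤ i → i < s → lam (i + 1) + (ρ (i + 1) : ℤ) ≤ lam i + (ρ i : ℤ)) := by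
  intro ρ lam
  have hρ : ∀ i, ρ i = ((Finset.Icc 1 (i - 1)).filter fun j => 1 - q i ≤ q j).card :=
    fun i => rfl
  have hlam : ∀ i, lam i =
      if i ≤ a then q i + (p : ℤ) - 1 else q i + (p : ℤ) - 1 + (i : ℤ) - (ρ i : ℤ) :=
    fun i => rfl
  have hrho1 : ∀ i, 1 ≤ i → i ≤ a → (ρ i : ℤ) = (i : ℤ) - 1 := by
    intro i hi1 hia
    have hfil : (Finset.Icc 1 (i - 1)).filter (fun j => 1 - q i ≤ q j)
        = Finset.Icc 1 (i - 1) := by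
      apply Finset.filter_true_of_mem
      intro j hj
      simp only [Finset.mem_Icc] at hj
      have hqj : 0 < q j := hpos j hj.1 (le_trans hj.2 (le_trans (Nat.sub_le i 1) hia))
      have hqi : 0 < q i := hpos i hi1 hia
      omega
    have : ρ i = i - 1 := by rw [hρ, hfil, Nat.card_Icc]; omega
    omega
  refine ⟨hrho1, ?_, ?_⟩
  · intro i hai his
    rw [hρ, hρ]
    apply Finset.card_le_card
    intro j hj
    simp only [Finset.mem_filter, Finset.mem_Icc, Nat.add_sub_cancel] at hj ⊢
    have hi1 : 1 ≤ i := by omega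
    have hdq : q (i + 1) < q i := hdec i hi1 (by omega)
    have hqi : q i < 0 := hneg i hai (by omega)
    have hji : j ≠ i := by
      intro h; subst h; omega
    refine ⟨⟨hj.1.1, by omega⟩, by omega⟩
  · intro i hi1 his
    rw [hlam, hlam]
    have hdq : q (i + 1) < q i := hdec i hi1 his
    by_cases hia : i ≤ a
    · rw [if_pos hia]
      have hρi := hrho1 i hi1 hia
      by_cases hia' : i + 1 ≤ a
      · rw [if_pos hia']
        have hρi' := hrho1 (i + 1) (by omega) hia'
        push_cast at hρi' ⊢
        omega
      · rw [if_neg hia']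
        have hqi : 0 < q i := hpos i hi1 hia
        have hqi' : q (i + 1) < 0 := hneg (i + 1) (by omega) (by omega)
        push_cast
        omega
    · rw [if_neg hia, if_neg (by omega : ¬ i + 1 ≤ a)]
      push_cast
      omega
end

section
/- With notation as in the setup for isotropic degeneracy loci (partition λ defined from p and q), the combinatorial quantity γ_i = #{j : 1 ≤ j < i, λ_i + λ_j > 2(p-1) + i - j} equals ρ_i = #{j : 1 ≤ j < i, q_j ≥ 1 - q_i}. In particular γ_i = i - 1 whenever q_i > 0. -/
/-!
Since `q` is strictly decreasing with integer values, `{j < i | q j ≥ 1 - q i}` is the initial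
segment `{1, …, ρ i}`, and `q` drops by at least `k - j` from `j` to `k`. For `i ≤ a` every
`j < i` satisfies both conditions. For `i > a`, the map `j ↦ |q j|` embeds `{ρ i + 1, …, i}`
into `{1, …, -q i}` (injective by the distinctness hypothesis), so `i - ρ i ≤ -q i`, i.e.
`λ i ≤ p - 1`; this rules out every pair with `j > a`. For `j ≤ a < i`, the inequality
`λ i + λ j > 2(p-1) + i - j` reads `q i + q j > ρ i - j`, which holds exactly when `j ≤ ρ i`:
one direction from the drop bound below `q (ρ i) ≥ 1 - q i`, the other from
`q (ρ i + 1) < -q i`, strict because `q (ρ i + 1) ≠ -q i`.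
-/

open Finset

namespace IsotropicLocus

theorem le_card_filter_Icc_iff {P : ℕ → Prop} [DecidablePred P] {n j : ℕ}
    (hP : ∀ j k, 1 ≤ j → j ≤ k → k ≤ n → P k → P j) (hj : 1 ≤ j) (hjn : j ≤ n) :
    j ≤ #{k ∈ Icc 1 n | P k} ↔ P j := by
  constructor
  · intro hle
    by_contra hPj
    have hsub : {k ∈ Icc 1 n | P k} ⊆ Icc 1 (j - 1) := by
      intro k hk
      rw [mem_filter, mem_Icc] at hk
      rw [mem_Icc]
      refine ⟨hk.1.1, Nat.le_sub_one_of_lt (lt_of_not_ge fun hjk => hPj ?_)⟩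
      exact hP j k hj hjk hk.1.2 hk.2
    have := card_le_card hsub
    rw [Nat.card_Icc] at this
    omega
  · intro hPj
    calc j = #(Icc 1 j) := by simp
      _ ≤ _ := card_le_card fun k hk => by
        rw [mem_Icc] at hk
        exact mem_filter.2 ⟨mem_Icc.2 ⟨hk.1, hk.2.trans hjn⟩, hP k j hk.1 hk.2 hjn hPj⟩

theorem add_sub_le_of_le {s : ℕ} {q : ℕ → ℤ} (hdec : ∀ i, 1 ≤ i → i < s → q (i + 1) < q i)
    {j k : ℕ} (hj : 1 ≤ j) (hjk : j ≤ k) (hks : k ≤ s) : q k + ((k : ℤ) - j) ≤ q j := by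
  induction k, hjk using Nat.le_induction with
  | base => simp
  | succ k hjk ih =>
    have := hdec k (hj.trans hjk) (by omega)
    have := ih (by omega)
    push_cast
    linarith

theorem apply_le_apply_of_le {s : ℕ} {q : ℕ → ℤ} (hdec : ∀ i, 1 ≤ i → i < s → q (i + 1) < q i)
    {j k : ℕ} (hj : 1 ≤ j) (hjk : j ≤ k) (hks : k ≤ s) : q k ≤ q j := by
  have := add_sub_le_of_le hdec hj hjk hks
  have : (j : ℤ) ≤ k := by exact_mod_cast hjk
  linarith

def rho (q : ℕ → ℤ) (i : ℕ) : ℕ :=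
  #{j ∈ Icc 1 (i - 1) | 1 - q i ≤ q j}

def lam (p a : ℕ) (q : ℕ → ℤ) (i : ℕ) : ℤ :=
  if i ≤ a then q i + (p : ℤ) - 1 else q i + (p : ℤ) - 1 + (i : ℤ) - (rho q i : ℤ)

theorem le_rho_iff {s : ℕ} {q : ℕ → ℤ} (hdec : ∀ i, 1 ≤ i → i < s → q (i + 1) < q i)
    {i j : ℕ} (hj : 1 ≤ j) (hji : j < i) (his : i ≤ s) :
    j ≤ rho q i ↔ 1 - q i ≤ q j :=
  le_card_filter_Icc_iff
    (fun _ _ hj hjk hk h => h.trans (apply_le_apply_of_le hdec hj hjk (by omega))) hj (by omega)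

theorem rho_le_sub_one (q : ℕ → ℤ) (i : ℕ) : rho q i ≤ i - 1 :=
  (card_filter_le _ _).trans (by simp)

theorem rho_eq_sub_one_of_pos {s : ℕ} {q : ℕ → ℤ} (hdec : ∀ i, 1 ≤ i → i < s → q (i + 1) < q i)
    {i : ℕ} (his : i ≤ s) (hqi : 0 < q i) : rho q i = i - 1 := by
  rw [rho, filter_true_of_mem fun j hj => ?_, Nat.card_Icc, Nat.add_sub_cancel]
  rw [mem_Icc] at hj
  have := apply_le_apply_of_le hdec hj.1 (show j ≤ i by omega) his
  linarith

theorem abs_ne_abs_of_lt {a s : ℕ} {q : ℕ → ℤ}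
    (hdec : ∀ i, 1 ≤ i → i < s → q (i + 1) < q i)
    (hpos : ∀ i, 1 ≤ i → i ≤ a → 0 < q i)
    (hneg : ∀ i, a < i → i ≤ s → q i < 0)
    (hdist : ∀ i j, 1 ≤ i → i ≤ a → a < j → j ≤ s → q i ≠ -q j)
    {j k : ℕ} (hj : 1 ≤ j) (hjk : j < k) (hks : k ≤ s) :
    |q j| ≠ |q k| := by
  have hlt : q k < q j := by
    have := add_sub_le_of_le hdec hj hjk.le hks
    have : (j : ℤ) < k := by exact_mod_cast hjk
    linarith
  rcases le_or_gt k a with hka | hak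
  · rw [abs_of_pos (hpos j hj (by omega)), abs_of_pos (hpos k (by omega) hka)]
    exact hlt.ne'
  rcases le_or_gt j a with hja | haj
  · rw [abs_of_pos (hpos j hj hja), abs_of_neg (hneg k hak hks)]
    exact hdist j k hj hja hak hks
  · rw [abs_of_neg (hneg j haj (by omega)), abs_of_neg (hneg k hak hks)]
    exact (neg_lt_neg hlt).ne

theorem sub_rho_le_neg {a s : ℕ} {q : ℕ → ℤ}
    (hdec : ∀ i, 1 ≤ i → i < s → q (i + 1) < q i)
    (hpos : ∀ i, 1 ≤ i → i ≤ a → 0 < q i)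
    (hneg : ∀ i, a < i → i ≤ s → q i < 0)
    (hdist : ∀ i j, 1 ≤ i → i ≤ a → a < j → j ≤ s → q i ≠ -q j)
    {i : ℕ} (hai : a < i) (his : i ≤ s) : (i : ℤ) - rho q i ≤ -q i := by
  have hrho := rho_le_sub_one q i
  have hmaps : Set.MapsTo (fun j => |q j|) (Icc (rho q i + 1) i) (Icc 1 (-q i)) := by
    intro j hj
    simp only [coe_Icc, Set.mem_Icc] at hj ⊢
    rcases le_or_gt j a with hja | haj
    · have hqj := hpos j (by omega) hja
      have := (le_rho_iff hdec (j := j) (by omega) (by omega) his).not.1 (by omega)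
      rw [abs_of_pos hqj]
      omega
    · have := apply_le_apply_of_le hdec (by omega) hj.2 his
      have hqj := hneg j haj (by omega)
      rw [abs_of_neg hqj]
      omega
  have hinj : Set.InjOn (fun j => |q j|) (Icc (rho q i + 1) i) := by
    intro j hj k hk hjk
    rw [coe_Icc, Set.mem_Icc] at hj hk
    rcases lt_trichotomy j k with hlt | heq | hgt
    · exact absurd hjk (abs_ne_abs_of_lt hdec hpos hneg hdist (by omega) hlt (by omega))
    · exact heq
    · exact absurd hjk.symm (abs_ne_abs_of_lt hdec hpos hneg hdist (by omega) hgt (by omega))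
  have := card_le_card_of_injOn _ hmaps hinj
  rw [Nat.card_Icc, Int.card_Icc] at this
  have := hneg i hai his
  omega

theorem sub_lt_add_iff_le_rho {a s : ℕ} {q : ℕ → ℤ}
    (hdec : ∀ i, 1 ≤ i → i < s → q (i + 1) < q i)
    (hdist : ∀ i j, 1 ≤ i → i ≤ a → a < j → j ≤ s → q i ≠ -q j)
    {i j : ℕ} (hj : 1 ≤ j) (hja : j ≤ a) (hai : a < i) (his : i ≤ s) :
    (rho q i : ℤ) - j < q i + q j ↔ j ≤ rho q i := by
  have hrho := rho_le_sub_one q i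
  constructor
  · intro hlt
    by_contra! hrj
    have hnot := (le_rho_iff hdec (j := rho q i + 1) (by omega) (by omega) his).not.1 (by omega)
    have hne := hdist (rho q i + 1) i (by omega) (by omega) hai his
    have := add_sub_le_of_le hdec (by omega) (by omega : rho q i + 1 ≤ j) (by omega)
    push_cast at this
    omega
  · intro hjr
    have hrho_mem := (le_rho_iff hdec (j := rho q i) (by omega) (by omega) his).1 le_rfl
    have := add_sub_le_of_le hdec hj hjr (by omega)
    linarith

theorem lam_add_lam_gt_iff {p a s : ℕ} {q : ℕ → ℤ}
    (hdec : ∀ i, 1 ≤ i → i < s → q (i + 1) < q i)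
    (hpos : ∀ i, 1 ≤ i → i ≤ a → 0 < q i)
    (hneg : ∀ i, a < i → i ≤ s → q i < 0)
    (hdist : ∀ i j, 1 ≤ i → i ≤ a → a < j → j ≤ s → q i ≠ -q j)
    {i j : ℕ} (hj : 1 ≤ j) (hji : j < i) (his : i ≤ s) :
    2 * ((p : ℤ) - 1) + i - j < lam p a q i + lam p a q j ↔ 1 - q i ≤ q j := by
  have hji' : (j : ℤ) < i := by exact_mod_cast hji
  unfold lam
  split_ifs with hia hja hja
  · have := add_sub_le_of_le hdec hj hji.le his
    have := hpos i (by omega) hia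
    constructor <;> intro <;> linarith
  · omega
  · rw [← le_rho_iff hdec hj hji his,
      ← sub_lt_add_iff_le_rho hdec hdist hj hja (by omega) his]
    constructor <;> intro <;> linarith
  · have := sub_rho_le_neg hdec hpos hneg hdist (by omega) his
    have := sub_rho_le_neg hdec hpos hneg hdist (by omega : a < j) (by omega)
    have := hneg i (by omega) his
    have := hneg j (by omega) (by omega)
    exact iff_of_false (by linarith) (by linarith)

end IsotropicLocus

open IsotropicLocus in
theorem stmt4_general (p a s : ℕ) (q : ℕ → ℤ)
    (hdec : ∀ i, 1 ≤ i → i < s → q (i + 1) < q i)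
    (hpos : ∀ i, 1 ≤ i → i ≤ a → 0 < q i)
    (hneg : ∀ i, a < i → i ≤ s → q i < 0)
    (hdist : ∀ i j, 1 ≤ i → i ≤ a → a < j → j ≤ s → q i ≠ -q j) :
    let ρ : ℕ → ℕ := fun i => ((Finset.Icc 1 (i - 1)).filter fun j => 1 - q i ≤ q j).card
    let lam : ℕ → ℤ := fun i =>
      if i ≤ a then q i + (p : ℤ) - 1 else q i + (p : ℤ) - 1 + (i : ℤ) - (ρ i : ℤ)
    let γ : ℕ → ℕ := fun i =>
      ((Finset.Icc 1 (i - 1)).filter fun (j : ℕ) =>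
        2 * ((p : ℤ) - 1) + (i : ℤ) - (j : ℤ) < lam i + lam j).card
    (∀ i, 1 ≤ i → i ≤ s → γ i = ρ i) ∧
    (∀ i, 1 ≤ i → i ≤ s → 0 < q i → (γ i : ℤ) = (i : ℤ) - 1) := by
  intro ρ lam γ
  have hγ : ∀ i, 1 ≤ i → i ≤ s → γ i = ρ i := fun i _ his =>
    congrArg Finset.card <| Finset.filter_congr fun j hj => by
      rw [Finset.mem_Icc] at hj
      exact lam_add_lam_gt_iff hdec hpos hneg hdist hj.1 (by omega) his
  refine ⟨hγ, fun i hi his hqi => ?_⟩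
  have := rho_eq_sub_one_of_pos hdec his hqi
  rw [hγ i hi his]
  change ((rho q i : ℕ) : ℤ) = i - 1
  omega

/-- With the setup for isotropic degeneracy loci (strictly decreasing `q` on
`{1,…,s}`, positive up to index `a`, negative afterwards, with
`q_1,…,q_a,-q_{a+1},…,-q_s` distinct, `ρ i = #{j < i : q j ≥ 1 - q i}`, and
`λ` built from `p, q, ρ`), the quantity
`γ i = #{j : 1 ≤ j < i, λ i + λ j > 2(p-1) + i - j}` equals `ρ i`, and
`γ i = i - 1` whenever `q i > 0`. -/
theorem stmt4 (p a s : ℕ) (q : ℕ → ℤ)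
    (hp1 : 1 ≤ p) (ha1 : 1 ≤ a) (has : a ≤ s)
    (hdec : ∀ i, 1 ≤ i → i < s → q (i + 1) < q i)
    (hpos : ∀ i, 1 ≤ i → i ≤ a → 0 < q i)
    (hneg : ∀ i, a < i → i ≤ s → q i < 0)
    (hdist : ∀ i j, 1 ≤ i → i ≤ a → a < j → j ≤ s → q i ≠ -q j) :
    let ρ : ℕ → ℕ := fun i => ((Finset.Icc 1 (i - 1)).filter fun j => 1 - q i ≤ q j).card
    let lam : ℕ → ℤ := fun i =>
      if i ≤ a then q i + (p : ℤ) - 1 else q i + (p : ℤ) - 1 + (i : ℤ) - (ρ i : ℤ)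
    let γ : ℕ → ℕ := fun i =>
      ((Finset.Icc 1 (i - 1)).filter fun (j : ℕ) =>
        2 * ((p : ℤ) - 1) + (i : ℤ) - (j : ℤ) < lam i + lam j).card
    (∀ i, 1 ≤ i → i ≤ s → γ i = ρ i) ∧
    (∀ i, 1 ≤ i → i ≤ s → 0 < q i → (γ i : ℤ) = (i : ℤ) - 1) :=
  stmt4_general p a s q hdec hpos hneg hdist
end

section
/- Let k = (k_1 ≤ k_2 ≤ ⋯ ≤ k_s) be a weakly increasing sequence of positive integers with i ≤ k_i for all i, and define β = (β_1 ≤ ⋯ ≤ β_s) to be the componentwise-minimal weakly increasing sequence with i ≤ β_i ≤ k_i such that β_s = k_s and β_i = k_i whenever q_i + k_i ≥ q_{i+1} + k_{i+1} + 1 (where q is a fixed strictly decreasing integer sequence). Then k is the unique weakly increasing sequence β' with β ≤ β' ≤ k (componentwise) such that the associated partition λ⁺(p, q, β') is strict; i.e., if β_i ≤ β'_i ≤ k_i for all i, β' weakly increasing, and q_i + β'_i ≥ q_{i+1} + β'_{i+1} + 1 for all i (the strictness condition), then β'_i = k_i for all i. -/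
/-- Let `q : {1,…,s} → ℤ` be strictly decreasing and `k` a weakly increasing
sequence of positive integers with `i ≤ k i`.  Let `β` be the componentwise
minimal weakly increasing sequence with `i ≤ β i ≤ k i`, `β s = k s`, and
`β i = k i` whenever `q i + k i ≥ q (i+1) + k (i+1) + 1`.  Then `k` is the
unique weakly increasing sequence `β'` with `β ≤ β' ≤ k` componentwise whose
associated partition is strict, i.e. satisfying
`q i + β' i ≥ q (i+1) + β' (i+1) + 1` for all `i`. -/
theorem stmt5 (s : ℕ) (hs : 1 ≤ s) (q : ℕ → ℤ) (k β : ℕ → ℕ)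
    (hqdec : ∀ i, 1 ≤ i → i < s → q (i + 1) < q i)
    (hk_inc : ∀ i, 1 ≤ i → i < s → k i ≤ k (i + 1))
    (hk_lb : ∀ i, 1 ≤ i → i ≤ s → i ≤ k i)
    (hβ_inc : ∀ i, 1 ≤ i → i < s → β i ≤ β (i + 1))
    (hβ_lb : ∀ i, 1 ≤ i → i ≤ s → i ≤ β i)
    (hβ_ub : ∀ i, 1 ≤ i → i ≤ s → β i ≤ k i)
    (hβ_s : β s = k s)
    (hβ_forced : ∀ i, 1 ≤ i → i < s →
      q (i + 1) + (k (i + 1) : ℤ) + 1 ≤ q i + (k i : ℤ) → β i = k i)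
    (hβ_min : ∀ β'' : ℕ → ℕ,
      (∀ i, 1 ≤ i → i < s → β'' i ≤ β'' (i + 1)) →
      (∀ i, 1 ≤ i → i ≤ s → i ≤ β'' i) →
      (∀ i, 1 ≤ i → i ≤ s → β'' i ≤ k i) →
      β'' s = k s →
      (∀ i, 1 ≤ i → i < s →
        q (i + 1) + (k (i + 1) : ℤ) + 1 ≤ q i + (k i : ℤ) → β'' i = k i) →
      ∀ i, 1 ≤ i → i ≤ s → β i ≤ β'' i)
    (β' : ℕ → ℕ)
    (hβ'_inc : ∀ i, 1 ≤ i → i < s → β' i ≤ β' (i + 1))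
    (hβ'_lb : ∀ i, 1 ≤ i → i ≤ s → β i ≤ β' i)
    (hβ'_ub : ∀ i, 1 ≤ i → i ≤ s → β' i ≤ k i)
    (hβ'_strict : ∀ i, 1 ≤ i → i < s →
      q (i + 1) + (β' (i + 1) : ℤ) + 1 ≤ q i + (β' i : ℤ)) :
    ∀ i, 1 ≤ i → i ≤ s → β' i = k i := by
  have H : ∀ d i, 1 ≤ i → i ≤ s → s - i = d → β' i = k i := by
    intro d
    induction d with
    | zero =>
      intro i hi his hd
      have : i = s := by omega
      subst this
      have h1 := hβ'_lb i hi his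
      have h2 := hβ'_ub i hi his
      omega
    | succ n ih =>
      intro i hi his hd
      have hlt : i < s := by omega
      have hnext : β' (i + 1) = k (i + 1) := ih (i + 1) (by omega) (by omega) (by omega)
      have hstr := hβ'_strict i hi hlt
      rw [hnext] at hstr
      have hub := hβ'_ub i hi (le_of_lt hlt)
      have hforced : β i = k i := by
        apply hβ_forced i hi hlt
        have : (β' i : ℤ) ≤ (k i : ℤ) := by exact_mod_cast hub
        linarith
      have hlb := hβ'_lb i hi (le_of_lt hlt)
      omega
  intro i hi his
  exact H (s - i) i hi his rfl
end

section
/- The number of partitions (weakly decreasing sequences of nonnegative integers) contained in the partition ν = (ν_1 ≥ ν_2 ≥ ⋯ ≥ ν_r ≥ 0) equals the binomial determinant det(binom(ν_j + r - i + 1, 1 + j - i))_{1 ≤ i,j ≤ r}. -/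
/-!
We count partitions lying strictly below `ν` (`μ i < ν i`); the theorem is the case `ν + 1`,
and the matrix becomes `binom (ν j + (r - 1 - i)) (j + 1 - i)`. For antitone `ν` with
`ν 0 = a + 1` both sides satisfy `f ν = f (min ν a) + f (Fin.tail ν)`. For the count, split on
whether `μ 0 = a`. For the determinant, Pascal's rule in column `0` splits off the minor of the
`(0, 0)` entry and leaves `ν 0` lowered to `a`; whenever then `ν (j + 1) = ν j + 1`, Pascal's rule
makes column `j + 1` the sum of column `j` and the column for `ν (j + 1)` lowered to `ν j`, so one
by one the parts equal to `a + 1` drop to `a` without changing the determinant. The recursion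
stops at `r = 0` or at `ν (r - 1) = 0`, where the last column vanishes.
-/

open Function Matrix

theorem Fin.antitone_cons {α : Type*} [Preorder α] {n : ℕ} {a : α} {f : Fin n → α} :
    Antitone (Fin.cons a f : Fin (n + 1) → α) ↔ (∀ i, f i ≤ a) ∧ Antitone f := by
  rw [antitone_iff_forall_lt, antitone_iff_forall_lt]
  exact Fin.liftFun_cons (· ≥ ·)

theorem Matrix.det_updateCol_zero_single {R : Type*} [CommRing R] {n : ℕ}
    (A : Matrix (Fin (n + 1)) (Fin (n + 1)) R) :
    (A.updateCol 0 (Pi.single 0 1)).det = (A.submatrix Fin.succ Fin.succ).det := by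
  rw [← det_transpose, ← updateRow_transpose, ← adjugate_apply,
    adjugate_fin_succ_eq_det_submatrix, Fin.succAbove_zero, ← transpose_submatrix, det_transpose]
  simp

def binom (n : ℕ) (k : ℤ) : ℤ := if 0 ≤ k then n.choose k.toNat else 0

@[simp] theorem binom_natCast (n k : ℕ) : binom n k = n.choose k := by
  simp [binom]

theorem binom_of_neg (n : ℕ) {k : ℤ} (hk : k < 0) : binom n k = 0 := by
  simp [binom, not_le.2 hk]

theorem binom_natCast_sub (n k i : ℕ) :
    binom n ((k : ℤ) - i) = if i ≤ k then (n.choose (k - i) : ℤ) else 0 := by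
  split_ifs with h
  · rw [← Nat.cast_sub h, binom_natCast]
  · exact binom_of_neg n (by omega)

theorem binom_neg_natCast (n i : ℕ) : binom n (-i) = if i = 0 then 1 else 0 := by
  simpa using binom_natCast_sub n 0 i

theorem binom_eq_zero_of_lt {n : ℕ} {k : ℤ} (h : (n : ℤ) < k) : binom n k = 0 := by
  lift k to ℕ using by omega
  rw [binom_natCast, Nat.choose_eq_zero_of_lt (by omega), Nat.cast_zero]

theorem binom_succ_succ (n : ℕ) (k : ℤ) :
    binom (n + 1) (k + 1) = binom n k + binom n (k + 1) := by
  rcases lt_trichotomy k (-1) with hk | rfl | hk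
  · rw [binom_of_neg _ (by omega), binom_of_neg _ (by omega), binom_of_neg _ (by omega), add_zero]
  · simp [binom]
  · lift k to ℕ using by omega
    simp only [← Nat.cast_succ, binom_natCast, Nat.choose_succ_succ, Nat.cast_add]

def binomMatrix {r : ℕ} (ν : Fin r → ℕ) : Matrix (Fin r) (Fin r) ℤ :=
  of fun i j => binom (ν j + i.rev) ((j : ℕ) + 1 - (i : ℕ))

theorem binomMatrix_update {r : ℕ} (ν : Fin r → ℕ) (k : Fin r) (a : ℕ) :
    binomMatrix (update ν k a) =
      (binomMatrix ν).updateCol k fun i => binom (a + i.rev) ((k : ℕ) + 1 - (i : ℕ)) := by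
  ext i j
  rcases eq_or_ne j k with rfl | hjk
  · simp [binomMatrix]
  · simp [binomMatrix, hjk]

theorem det_binomMatrix_update_of_eq_succ {r : ℕ} (ν : Fin r → ℕ) {j j' : Fin r}
    (hj' : (j' : ℕ) = j + 1) (h : ν j' = ν j + 1) :
    (binomMatrix ν).det = (binomMatrix (update ν j' (ν j))).det := by
  set ν' := update ν j' (ν j)
  have hjj' : j' ≠ j := fun e => by simp [e] at hj'
  have hν : ν = update ν' j' (ν j + 1) := by simp [ν', ← h]
  have hcol : binomMatrix ν = (binomMatrix ν').updateCol j' fun i =>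
      binomMatrix ν' i j' + binomMatrix ν' i j := by
    rw [hν, binomMatrix_update]
    congr 1
    funext i
    have : ((j' : ℕ) : ℤ) + 1 - (i : ℕ) = ((j : ℕ) + 1 - (i : ℕ)) + 1 := by
      rw [hj']; push_cast; ring
    simp only [binomMatrix, of_apply, ν', update_self, update_of_ne hjj'.symm, this]
    rw [add_right_comm, binom_succ_succ, add_comm]
  rw [hcol, det_updateCol_add_self _ hjj']

theorem det_binomMatrix_eq_update_zero_add_tail {s : ℕ} (ν : Fin (s + 1) → ℕ) {a : ℕ}
    (h : ν 0 = a + 1) :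
    (binomMatrix ν).det = (binomMatrix (update ν 0 a)).det + (binomMatrix (Fin.tail ν)).det := by
  set ν' := update ν 0 a
  have hν : ν = update ν' 0 (a + 1) := by simp [ν', ← h]
  have hcol : binomMatrix ν = (binomMatrix ν').updateCol 0
      ((fun i => binomMatrix ν' i 0) + Pi.single 0 1) := by
    rw [hν, binomMatrix_update]
    congr 1
    funext i
    simp only [binomMatrix, of_apply, ν', update_self, Fin.val_zero, Pi.add_apply,
      Pi.single_apply]
    rw [add_right_comm, show ((0 : ℕ) : ℤ) + 1 - (i : ℕ) = -(i : ℕ) + 1 by ring,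
      binom_succ_succ, binom_neg_natCast, add_comm]
    simp only [Fin.val_eq_zero_iff]
  rw [hcol, det_updateCol_add, updateCol_eq_self, det_updateCol_zero_single]
  congr 2
  ext i j
  simp [binomMatrix, ν', Fin.tail, Fin.val_rev]

def capUpTo {r : ℕ} (ν : Fin r → ℕ) (a k : ℕ) : Fin r → ℕ :=
  fun i => if (i : ℕ) ≤ k then min (ν i) a else ν i

theorem det_binomMatrix_capUpTo_succ {r : ℕ} {ν : Fin r → ℕ} (hν : Antitone ν) {a : ℕ}
    (hle : ∀ i, ν i ≤ a + 1) (k : ℕ) :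
    (binomMatrix (capUpTo ν a k)).det = (binomMatrix (capUpTo ν a (k + 1))).det := by
  by_cases hk : ∃ j' : Fin r, (j' : ℕ) = k + 1 ∧ ν j' = a + 1
  · obtain ⟨j', hj', hνj'⟩ := hk
    set j : Fin r := ⟨k, by omega⟩
    have hνj : ν j = a + 1 :=
      le_antisymm (hle j) (hνj' ▸ hν (Fin.le_def.2 (by simp [j, hj'])))
    have htie : capUpTo ν a k j' = capUpTo ν a k j + 1 := by simp [capUpTo, hj', hνj', hνj, j]
    rw [det_binomMatrix_update_of_eq_succ _ hj' htie]
    congr 2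
    funext i
    rcases eq_or_ne i j' with rfl | hi
    · simp [capUpTo, hj', hνj', hνj, j]
    · have : (i : ℕ) ≠ k + 1 := fun e => hi (Fin.ext (e.trans hj'.symm))
      simp only [capUpTo, update_of_ne hi]
      split_ifs <;> first | rfl | omega
  · push Not at hk
    congr 2
    funext i
    simp only [capUpTo]
    split_ifs with h1 h2 h2
    · rfl
    · omega
    · have : ν i ≠ a + 1 := hk i (by omega)
      exact (min_eq_left (by have := hle i; omega)).symm
    · rfl

theorem det_binomMatrix_update_zero_eq_min {s : ℕ} {ν : Fin (s + 1) → ℕ} (hν : Antitone ν)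
    {a : ℕ} (h0 : ν 0 = a + 1) :
    (binomMatrix (update ν 0 a)).det = (binomMatrix fun i => min (ν i) a).det := by
  have hle : ∀ i, ν i ≤ a + 1 := fun i => h0 ▸ hν (Fin.zero_le i)
  have hchain : ∀ n, (binomMatrix (capUpTo ν a 0)).det = (binomMatrix (capUpTo ν a n)).det :=
    fun n => Nat.rec rfl (fun n ih => ih.trans (det_binomMatrix_capUpTo_succ hν hle n)) n
  have hstart : update ν 0 a = capUpTo ν a 0 := by
    funext i
    rcases eq_or_ne i 0 with rfl | hi
    · simp [capUpTo, h0]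
    · simp [capUpTo, hi, Fin.val_eq_zero_iff]
  have hend : capUpTo ν a s = fun i => min (ν i) a :=
    funext fun i => if_pos (Nat.lt_succ_iff.1 i.isLt)
  rw [hstart, hchain s, hend]

theorem det_binomMatrix_eq_min_add_tail {s : ℕ} {ν : Fin (s + 1) → ℕ} (hν : Antitone ν)
    {a : ℕ} (h0 : ν 0 = a + 1) :
    (binomMatrix ν).det =
      (binomMatrix fun i => min (ν i) a).det + (binomMatrix (Fin.tail ν)).det := by
  rw [det_binomMatrix_eq_update_zero_add_tail ν h0, det_binomMatrix_update_zero_eq_min hν h0]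

def partitionsBelow {r : ℕ} (ν : Fin r → ℕ) : Set (Fin r → ℕ) :=
  {μ | (∀ i, μ i < ν i) ∧ Antitone μ}

theorem partitionsBelow_finite {r : ℕ} (ν : Fin r → ℕ) : (partitionsBelow ν).Finite :=
  (Set.Finite.pi fun i => Set.finite_Iio (ν i)).subset fun _ hμ => Set.mem_univ_pi.2 hμ.1

theorem partitionsBelow_eq_empty {r : ℕ} {ν : Fin r → ℕ} {i : Fin r} (h : ν i = 0) :
    partitionsBelow ν = ∅ :=
  Set.eq_empty_of_forall_notMem fun μ hμ => by have := hμ.1 i; omega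

theorem ncard_partitionsBelow_eq_min_add_tail {s : ℕ} {ν : Fin (s + 1) → ℕ} (hν : Antitone ν)
    {a : ℕ} (h0 : ν 0 = a + 1) :
    (partitionsBelow ν).ncard =
      (partitionsBelow fun i => min (ν i) a).ncard + (partitionsBelow (Fin.tail ν)).ncard := by
  have htop :
      partitionsBelow ν ∩ {μ | μ 0 = a} = Fin.cons a '' partitionsBelow (Fin.tail ν) := by
    ext μ
    constructor
    · rintro ⟨⟨hlt, hμ⟩, hμ0 : μ 0 = a⟩
      refine ⟨Fin.tail μ,
        ⟨fun i => hlt i.succ, hμ.comp_monotone Fin.strictMono_succ.monotone⟩, ?_⟩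
      rw [← hμ0, Fin.cons_self_tail]
    · rintro ⟨τ, ⟨hlt, hτ⟩, rfl⟩
      refine ⟨⟨Fin.cases (by simp [h0]) fun i => by simpa [Fin.tail] using hlt i, ?_⟩,
        by simp⟩
      exact Fin.antitone_cons.2 ⟨fun i => Nat.lt_add_one_iff.1
        (h0 ▸ (hlt i).trans_le (hν (Fin.zero_le i.succ))), hτ⟩
  have hrest : partitionsBelow ν \ {μ | μ 0 = a} = partitionsBelow fun i => min (ν i) a := by
    ext μ
    simp only [partitionsBelow, Set.mem_sdiff, Set.mem_ofPred_eq, lt_min_iff]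
    constructor
    · rintro ⟨⟨hlt, hμ⟩, hne⟩
      have hμ0 : μ 0 < a := by have := hlt 0; omega
      exact ⟨fun i => ⟨hlt i, (hμ (Fin.zero_le i)).trans_lt hμ0⟩, hμ⟩
    · rintro ⟨hlt, hμ⟩
      exact ⟨⟨fun i => (hlt i).1, hμ⟩, (hlt 0).2.ne⟩
  rw [← Set.ncard_inter_add_ncard_sdiff_eq_ncard _ {μ | μ 0 = a} (partitionsBelow_finite ν),
    htop, hrest, Set.ncard_image_of_injective _ (Fin.cons_right_injective (α := fun _ => ℕ) a),
    add_comm]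

theorem ncard_partitionsBelow_eq_det : ∀ {r : ℕ} (ν : Fin r → ℕ), Antitone ν →
    ((partitionsBelow ν).ncard : ℤ) = (binomMatrix ν).det
  | 0, ν, _ => by
    rw [det_isEmpty, show partitionsBelow ν = Set.univ from
      Set.eq_univ_of_forall fun μ => ⟨finZeroElim, Subsingleton.antitone μ⟩]
    simp
  | s + 1, ν, hν => by
    cases h0 : ν 0 with
    | zero =>
      have hlast : ν (Fin.last s) = 0 := Nat.eq_zero_of_le_zero (h0 ▸ hν (Fin.zero_le _))
      rw [partitionsBelow_eq_empty hlast, Set.ncard_empty, Nat.cast_zero, eq_comm]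
      refine det_eq_zero_of_column_eq_zero (Fin.last s) fun i => binom_eq_zero_of_lt ?_
      simp [hlast, Fin.val_rev]
      omega
    | succ a =>
      rw [ncard_partitionsBelow_eq_min_add_tail hν h0, det_binomMatrix_eq_min_add_tail hν h0,
        Nat.cast_add, ncard_partitionsBelow_eq_det _ fun i j hij => min_le_min_right a (hν hij),
        ncard_partitionsBelow_eq_det (Fin.tail ν) fun i j hij => hν (Fin.succ_le_succ_iff.2 hij)]
termination_by r ν => ∑ i, ν i
decreasing_by
  · exact Finset.sum_lt_sum (fun i _ => min_le_left _ a) ⟨0, Finset.mem_univ _, by omega⟩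
  · rw [Fin.sum_univ_succ ν, h0]
    exact Nat.lt_add_of_pos_left (Nat.succ_pos a)

/-- The number of partitions (weakly decreasing sequences of nonnegative
integers) contained in a partition `ν = (ν_1 ≥ ⋯ ≥ ν_r ≥ 0)` equals the
binomial determinant `det(binom(ν_j + r - i + 1, 1 + j - i))_{1≤i,j≤r}`,
with the convention `binom(m, j) = 0` for `j < 0`. -/
theorem stmt7 (r : ℕ) (ν : Fin r → ℕ)
    (hdec : ∀ i j : Fin r, i ≤ j → ν j ≤ ν i) :
    (Nat.card {μ : Fin r → ℕ //
        (∀ i, μ i ≤ ν i) ∧ ∀ i j : Fin r, i ≤ j → μ j ≤ μ i} : ℤ) =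
      Matrix.det (Matrix.of fun i j : Fin r =>
        if (i : ℕ) ≤ (j : ℕ) + 1 then
          ((Nat.choose (ν j + r - (i : ℕ)) ((j : ℕ) + 1 - (i : ℕ)) : ℤ))
        else 0) := by
  have hset : partitionsBelow (ν + 1) =
      {μ | (∀ i, μ i ≤ ν i) ∧ ∀ i j : Fin r, i ≤ j → μ j ≤ μ i} := by
    ext μ
    simp only [partitionsBelow, Set.mem_ofPred_eq, Pi.add_apply, Pi.one_apply,
      Nat.lt_add_one_iff]
    rfl
  have hmatrix : binomMatrix (ν + 1) = of fun i j : Fin r =>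
      if (i : ℕ) ≤ (j : ℕ) + 1 then ((ν j + r - i).choose ((j : ℕ) + 1 - i) : ℤ) else 0 := by
    ext i j
    rw [binomMatrix, of_apply, of_apply, ← Nat.cast_succ, binom_natCast_sub, Pi.add_apply,
      Pi.one_apply, Fin.val_rev, show ν j + 1 + (r - (i + 1)) = ν j + r - i by omega]
  rw [← hmatrix, ← ncard_partitionsBelow_eq_det (ν + 1) fun i j h => Nat.succ_le_succ (hdec i j h),
    hset]
  rfl
end

section
/- Let n ≥ 1 and let z ∈ S_n be an involution (z = z^{-1}). Define the orthogonal Rothe diagram D^O(z) = {(i, z(j)) : z(i) > z(j) ≤ i < j}. If z is vexillary, i.e., the essential set Ess(D^O(z)) = {(i,j) ∈ D^O(z) : (i, j+1) ∉ D^O(z) and (i+1, j) ∉ D^O(z)} forms a chain under the partial order (a,b) ⪯ (i,j) ⟺ i ≤ a and b ≤ j, write Ess(D^O(z)) = {(i_1,j_1) ⪯ ⋯ ⪯ (i_s,j_s)}. Setting k_t = j_t - rank(z_{[i_t][j_t]}) (where z_{[i][j]} is the upper-left i×j submatrix of the permutation matrix of z), the sequence k_1 ≤ k_2 ≤ ⋯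 ≤ k_s is weakly increasing, and the sequence λ_k = i_t - j_t + 1 + k_t - k for k_{t-1} < k ≤ k_t (with k_0 = 0) defines a partition, i.e., is weakly decreasing and positive. -/
/-- The orthogonal Rothe diagram `D^O(z) = {(i, z(j)) : z(i) > z(j) ≤ i < j}`
of an involution `z` of `{1,…,n}`. -/
def rotheO (n : ℕ) (z : ℕ → ℕ) : Set (ℕ × ℕ) :=
  {p | ∃ i j, 1 ≤ i ∧ i < j ∧ j ≤ n ∧ z j ≤ i ∧ z j < z i ∧ p = (i, z j)}

/-- The essential set of a diagram `D`:
`{(i,j) ∈ D : (i, j+1) ∉ D and (i+1, j) ∉ D}`. -/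
def essSet (D : Set (ℕ × ℕ)) : Set (ℕ × ℕ) :=
  {p | p ∈ D ∧ (p.1, p.2 + 1) ∉ D ∧ (p.1 + 1, p.2) ∉ D}

/-- `rank(z_{[i][j]}) = #{a ≤ i : z(a) ≤ j}`, the rank of the upper-left
`i×j` submatrix of the permutation matrix of `z`. -/
def rkUL (z : ℕ → ℕ) (i j : ℕ) : ℕ :=
  ((Finset.Icc 1 i).filter fun a => z a ≤ j).card

/-!
Write `r(i, j) = rkUL z i j`. The chain order `(i, j) ⪯ (i', j')` means `i' ≤ i` and `j ≤ j'`,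
and `r` is 1-Lipschitz in each coordinate (in the column coordinate because `z` is injective).
Hence `k = j - r` increases along the chain while `i - r` decreases. So every part of block `t'`
is at most `i_{t'} - j_{t'} + k_{t'} - k_{t'-1} ≤ i_{t'-1} - j_{t'-1}`, whereas every part of an
earlier block `t` is at least `i_t - j_t + 1 ≥ 1`, because cells of `D^O(z)` lie weakly below
the diagonal.
-/

open Finset

lemma rkUL_mono {z : ℕ → ℕ} {i i' j j' : ℕ} (hi : i ≤ i') (hj : j ≤ j') :
    rkUL z i j ≤ rkUL z i' j' :=
  card_le_card fun a ha => by
    simp only [mem_filter, mem_Icc] at ha ⊢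
    omega

lemma rkUL_le_left (z : ℕ → ℕ) (i j : ℕ) : rkUL z i j ≤ i :=
  (card_filter_le _ _).trans (by simp)

lemma rkUL_le_add_sub_rows (z : ℕ → ℕ) (i i' j : ℕ) : rkUL z i j ≤ rkUL z i' j + (i - i') := by
  have hsub : (Icc 1 i).filter (fun a => z a ≤ j) ⊆
      (Icc 1 i').filter (fun a => z a ≤ j) ∪ Icc (i' + 1) i := fun a ha => by
    simp only [mem_filter, mem_Icc, mem_union] at ha ⊢
    omega
  calc rkUL z i j ≤ _ := card_le_card hsub
    _ ≤ _ := card_union_le _ _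
    _ = rkUL z i' j + (i - i') := by rw [Nat.card_Icc, Nat.add_sub_add_right]; rfl

lemma rkUL_le_add_sub_cols {z : ℕ → ℕ} {i : ℕ} (hz : Set.InjOn z (Set.Icc 1 i)) (j j' : ℕ) :
    rkUL z i j' ≤ rkUL z i j + (j' - j) := by
  have hsub : (Icc 1 i).filter (fun a => z a ≤ j') ⊆
      (Icc 1 i).filter (fun a => z a ≤ j) ∪ (Icc 1 i).filter (fun a => j < z a ∧ z a ≤ j') :=
    fun a ha => by
      simp only [mem_filter, mem_Icc, mem_union] at ha ⊢
      omega
  have hband : ((Icc 1 i).filter (fun a => j < z a ∧ z a ≤ j')).card ≤ j' - j := by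
    have := card_le_card_of_injOn z
      (s := (Icc 1 i).filter (fun a => j < z a ∧ z a ≤ j')) (t := Icc (j + 1) j')
      (fun a ha => by
        simp only [mem_coe, mem_filter, mem_Icc] at ha ⊢
        omega)
      (hz.mono <| by rw [← coe_Icc]; exact coe_subset.2 (filter_subset _ _))
    simpa using this
  calc rkUL z i j' ≤ _ := card_le_card hsub
    _ ≤ _ := card_union_le _ _
    _ ≤ rkUL z i j + (j' - j) := Nat.add_le_add_left hband _

lemma sub_rkUL_antitone {z : ℕ → ℕ} {i i' j j' : ℕ} (hi : i' ≤ i) (hj : j ≤ j') :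
    i' - rkUL z i' j' ≤ i - rkUL z i j := by
  have := rkUL_mono (z := z) (le_refl i) hj
  have := rkUL_le_add_sub_rows z i i' j'
  have := rkUL_le_left z i' j'
  omega

lemma sub_rkUL_mono {z : ℕ → ℕ} {i i' j j' : ℕ} (hz : Set.InjOn z (Set.Icc 1 i)) (hi : i' ≤ i)
    (hj : j ≤ j') : j - rkUL z i j ≤ j' - rkUL z i' j' := by
  have := rkUL_mono (z := z) hi (le_refl j')
  have := rkUL_le_add_sub_cols hz j j'
  omega

lemma le_of_mem_rotheO {n i j : ℕ} {z : ℕ → ℕ} (h : (i, j) ∈ rotheO n z) : j ≤ i ∧ i < n := by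
  obtain ⟨a, b, -, hab, hb, hzb, -, he⟩ := h
  simp only [Prod.mk.injEq] at he
  omega

theorem stmt13_general (n s : ℕ) (z : ℕ → ℕ)
    (hz_inv : ∀ i, 1 ≤ i → i ≤ n → z (z i) = i)
    (iSeq jSeq : ℕ → ℕ)
    (hEss : essSet (rotheO n z) = {p | ∃ t, 1 ≤ t ∧ t ≤ s ∧ p = (iSeq t, jSeq t)})
    (hchain : ∀ t t', 1 ≤ t → t ≤ t' → t' ≤ s →
      iSeq t' ≤ iSeq t ∧ jSeq t ≤ jSeq t') :
    let kk : ℕ → ℕ := fun t =>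
      if t = 0 then 0 else jSeq t - rkUL z (iSeq t) (jSeq t)
    (∀ t, 1 ≤ t → t < s → kk t ≤ kk (t + 1)) ∧
    (∀ t m, 1 ≤ t → t ≤ s → kk (t - 1) < m → m ≤ kk t →
      0 < (iSeq t : ℤ) - (jSeq t : ℤ) + 1 + (kk t : ℤ) - (m : ℤ)) ∧
    (∀ t t' m m', 1 ≤ t → t ≤ t' → t' ≤ s →
      kk (t - 1) < m → m ≤ kk t → kk (t' - 1) < m' → m' ≤ kk t' → m ≤ m' →
      (iSeq t' : ℤ) - (jSeq t' : ℤ) + 1 + (kk t' : ℤ) - (m' : ℤ) ≤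
        (iSeq t : ℤ) - (jSeq t : ℤ) + 1 + (kk t : ℤ) - (m : ℤ)) := by
  intro kk
  have hinj : Set.InjOn z (Set.Icc 1 n) := Set.LeftInvOn.injOn fun a ha => hz_inv a ha.1 ha.2
  have hdiag : ∀ t, 1 ≤ t → t ≤ s → jSeq t ≤ iSeq t ∧ iSeq t < n := fun t ht hts =>
    le_of_mem_rotheO (by rw [hEss]; exact ⟨t, ht, hts, rfl⟩ : _ ∈ essSet _).1
  have hkk : ∀ t, 1 ≤ t → kk t = jSeq t - rkUL z (iSeq t) (jSeq t) := fun t ht =>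
    if_neg (by omega)
  refine ⟨fun t ht hts => ?_, fun t m ht hts _ hm => ?_,
    fun t t' m m' ht htt' hts _ hm hm' _ hmm => ?_⟩
  · obtain ⟨hi, hj⟩ := hchain t (t + 1) ht (by omega) (by omega)
    rw [hkk t ht, hkk (t + 1) (by omega)]
    exact sub_rkUL_mono (hinj.mono (Set.Icc_subset_Icc_right (hdiag t ht hts.le).2.le)) hi hj
  · have hji := (hdiag t ht hts).1
    omega
  · rcases htt'.eq_or_lt with rfl | hlt
    · omega
    obtain ⟨hi, hj⟩ := hchain t (t' - 1) ht (by omega) (by omega)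
    obtain ⟨hi', hj'⟩ := hchain (t' - 1) t' (by omega) (by omega) hts
    have hrows := sub_rkUL_antitone (z := z) hi' hj'
    have hrk := rkUL_le_left z (iSeq (t' - 1)) (jSeq (t' - 1))
    have hji := (hdiag t ht (by omega)).1
    rw [hkk t' (by omega)]
    rw [hkk (t' - 1) (by omega)] at hm'
    omega

/-- Let `z` be a vexillary involution of `{1,…,n}`, i.e. its essential set is
a chain `(i_1,j_1) ⪯ ⋯ ⪯ (i_s,j_s)` for the order `(a,b) ⪯ (i,j) ⟺ i ≤ a ∧
b ≤ j`.  With `k_t = j_t - rank(z_{[i_t][j_t]})` (and `k_0 = 0`), the sequence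
`k_1 ≤ ⋯ ≤ k_s` is weakly increasing, and the parts
`λ_m = i_t - j_t + 1 + k_t - m` for `k_{t-1} < m ≤ k_t` are positive and
weakly decreasing, i.e. define a partition. -/
theorem stmt13 (n s : ℕ) (hn : 1 ≤ n) (z : ℕ → ℕ)
    (hz_range : ∀ i, 1 ≤ i → i ≤ n → 1 ≤ z i ∧ z i ≤ n)
    (hz_inv : ∀ i, 1 ≤ i → i ≤ n → z (z i) = i)
    (iSeq jSeq : ℕ → ℕ)
    (hEss : essSet (rotheO n z) = {p | ∃ t, 1 ≤ t ∧ t ≤ s ∧ p = (iSeq t, jSeq t)})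
    (hchain : ∀ t t', 1 ≤ t → t ≤ t' → t' ≤ s →
      iSeq t' ≤ iSeq t ∧ jSeq t ≤ jSeq t') :
    let kk : ℕ → ℕ := fun t =>
      if t = 0 then 0 else jSeq t - rkUL z (iSeq t) (jSeq t)
    (∀ t, 1 ≤ t → t < s → kk t ≤ kk (t + 1)) ∧
    (∀ t m, 1 ≤ t → t ≤ s → kk (t - 1) < m → m ≤ kk t →
      0 < (iSeq t : ℤ) - (jSeq t : ℤ) + 1 + (kk t : ℤ) - (m : ℤ)) ∧
    (∀ t t' m m', 1 ≤ t → t ≤ t' → t' ≤ s →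
      kk (t - 1) < m → m ≤ kk t → kk (t' - 1) < m' → m' ≤ kk t' → m ≤ m' →
      (iSeq t' : ℤ) - (jSeq t' : ℤ) + 1 + (kk t' : ℤ) - (m' : ℤ) ≤
        (iSeq t : ℤ) - (jSeq t : ℤ) + 1 + (kk t : ℤ) - (m : ℤ)) :=
  stmt13_general n s z hz_inv iSeq jSeq hEss hchain
end
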